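/- For every partition π = (n_1,...,n_d) of n (with d addends), the set 𝒫_π of canonical plane matrices of type π is an affine plane in the ℂ-linear space Mat(n,n,ℂ): there exist a fixed matrix S ∈ Mat(n,n,ℂ) and a ℂ-linear subspace V ⊆ Mat(n,n,ℂ) with dim V = d such that 𝒫_π = S + V. -/

import Mathlib

/- Common setup: canonical plane matrices (P. Daugulis, "A parametrization of
matrix conjugacy orbit sets as unions of affine planes"). -/

open Matrix Polynomial

noncomputable section

/-- `ℕ`-indexed entries of the generalized companion matrix `R_l(y₁,...,y_l)`:
subdiagonal entries `1`, last column given (via Vieta) by the coefficients of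
`∏ (X - yᵢ)` (entry in row `k` of the last column is
`(−1)^{l+1−k}·e_{l+1−k}(y)`), all other entries `0`. -/
def genCompE (l : ℕ) (y : Fin l → ℂ) (i j : ℕ) : ℂ :=
  if i < l ∧ j < l then
    (if i = j + 1 then 1
     else if j = l - 1 then -((∏ k, (X - C (y k))).coeff i)
     else 0)
  else 0

/-- The generalized companion matrix `R_l(y₁,...,y_l)`, i.e. the companion
matrix of `∏ (X - yᵢ)`. -/
def genComp (l : ℕ) (y : Fin l → ℂ) : Matrix (Fin l) (Fin l) ℂ :=
  Matrix.of fun i j => genCompE l y i j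

/-- A partition of `n`, recorded by its stacks: `t` stacks, with strictly
decreasing positive distinct values `m 0 > m 1 > ... > m (t-1)` and positive
lengths `l j`, so that the partition consists of `l j` copies of `m j` and
`n = ∑ j, l j * m j`. -/
structure StackPartition (n : ℕ) where
  t : ℕ
  m : Fin t → ℕ
  l : Fin t → ℕ
  m_pos : ∀ j, 0 < m j
  l_pos : ∀ j, 0 < l j
  m_strictAnti : ∀ i j : Fin t, i < j → m j < m i
  sum_eq : (∑ j, l j * m j) = n

namespace StackPartition

variable {n : ℕ} (P : StackPartition n)

/-- `m j` extended by `0` beyond the number of stacks (`0`-indexed), so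
`mE 0 = m_1` and `mE t = m_{t+1} = 0` in the paper's notation. -/
def mE (j : ℕ) : ℕ := if h : j < P.t then P.m ⟨j, h⟩ else 0

/-- Row/column offset of the `j`-th diagonal block (`0`-indexed):
`S j = ∑_{i<j} l i * m i`. -/
def S (j : ℕ) : ℕ := ∑ i : Fin P.t, if (i : ℕ) < j then P.l i * P.m i else 0

/-- `sE j = ∑_{i<j} l i`; the paper's `s_j` (for `1`-indexed `j`) is `sE j`. -/
def sE (j : ℕ) : ℕ := ∑ i : Fin P.t, if (i : ℕ) < j then P.l i else 0

/-- The multiset of addends of the partition. -/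
def parts : Multiset ℕ := ∑ j : Fin P.t, Multiset.replicate (P.l j) (P.m j)

/-- Offsets for the direct sum `⊕_j (m_j - m_{j+1}) G_j`. -/
def T (k : ℕ) : ℕ :=
  ∑ i : Fin P.t, if (i : ℕ) < k then (P.m i - P.mE ((i : ℕ) + 1)) * P.sE ((i : ℕ) + 1) else 0

end StackPartition

/-- Parameters `λ_{j,1},...,λ_{j,l_j}` for each stack `j`. -/
def Params {n : ℕ} (P : StackPartition n) := (j : Fin P.t) → Fin (P.l j) → ℂ

/-- `ℕ`-indexed entry of the canonical plane matrix of type `P` with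
parameters `lam`: the `j`-th diagonal block (of size `l j * m j`, occupying
rows and columns `[S j, S (j+1))`) is `R_{l j}(lam j) ⊗ E_{m j}` (row index
`a` of the block encodes the pair `(a / m j, a % m j)`), the block directly
below it occupies the first `m (j+1)` rows of block `j+1` and the last `m j`
columns of block `j` and equals `[O | E_{m (j+1)}]`, and all other entries
vanish. -/
def cpmEntry {n : ℕ} (P : StackPartition n) (lam : Params P) (r c : ℕ) : ℂ :=
  (∑ j : Fin P.t,
    if P.S j ≤ r ∧ r < P.S ((j : ℕ) + 1) ∧ P.S j ≤ c ∧ c < P.S ((j : ℕ) + 1)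
        ∧ (r - P.S j) % P.m j = (c - P.S j) % P.m j then
      genCompE (P.l j) (lam j) ((r - P.S j) / P.m j) ((c - P.S j) / P.m j)
    else 0)
  +
  (∑ j : Fin P.t,
    if P.S ((j : ℕ) + 1) ≤ r ∧ r < P.S ((j : ℕ) + 1) + P.mE ((j : ℕ) + 1)
        ∧ P.S ((j : ℕ) + 1) - P.m j ≤ c ∧ c < P.S ((j : ℕ) + 1)
        ∧ c - (P.S ((j : ℕ) + 1) - P.m j)
            = (P.m j - P.mE ((j : ℕ) + 1)) + (r - P.S ((j : ℕ) + 1)) then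
      (1 : ℂ)
    else 0)

/-- The canonical plane matrix of type `P` with parameters `lam`. -/
def cpm {n : ℕ} (P : StackPartition n) (lam : Params P) : Matrix (Fin n) (Fin n) ℂ :=
  Matrix.of fun r c => cpmEntry P lam r c

/-- The set `𝒫_π` of canonical plane matrices of type `P`. -/
def planeSet {n : ℕ} (P : StackPartition n) : Set (Matrix (Fin n) (Fin n) ℂ) :=
  { A | ∃ lam : Params P, A = cpm P lam }

/-- Similarity (conjugacy) of square complex matrices. -/
def MatrixSimilar {n : ℕ} (A B : Matrix (Fin n) (Fin n) ℂ) : Prop :=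
  ∃ Q : Matrix (Fin n) (Fin n) ℂ, IsUnit Q.det ∧ A * Q = Q * B

/-- The `A`-cyclic subspace `ℂ[A]·v`, spanned by `v, Av, A²v, ...`. -/
def cyclicSpan {n : ℕ} (A : Matrix (Fin n) (Fin n) ℂ) (v : Fin n → ℂ) :
    Submodule ℂ (Fin n → ℂ) :=
  Submodule.span ℂ (Set.range fun k : ℕ => (A ^ k) *ᵥ v)

/-- `ℕ`-indexed entry of the matrix
`G_j = ⊕_{i≤j} C(a_{i,0},...,a_{i,l_i−1}) + Σ_{i<j} E_{s_i+1,s_i}`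
(`0`-indexed `j`; the `i`-th diagonal block is the companion matrix of
`∏_k (X - λ_{i,k})`, and the matrix units sit just below the lower-left
corners of the diagonal blocks). -/
def GEntry {n : ℕ} (P : StackPartition n) (lam : Params P) (j r c : ℕ) : ℂ :=
  (∑ i : Fin P.t,
    if (i : ℕ) ≤ j ∧ P.sE i ≤ r ∧ r < P.sE ((i : ℕ) + 1)
        ∧ P.sE i ≤ c ∧ c < P.sE ((i : ℕ) + 1) then
      genCompE (P.l i) (lam i) (r - P.sE i) (c - P.sE i)
    else 0)
  +
  (∑ i : Fin P.t,
    if 1 ≤ (i : ℕ) ∧ (i : ℕ) ≤ j ∧ r = P.sE i ∧ c + 1 = P.sE i then (1 : ℂ) else 0)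

/-- The `s_j × s_j` matrix `G_j` (`0`-indexed `j`, of size `sE (j+1)`). -/
def Gm {n : ℕ} (P : StackPartition n) (lam : Params P) (j : Fin P.t) :
    Matrix (Fin (P.sE ((j : ℕ) + 1))) (Fin (P.sE ((j : ℕ) + 1))) ℂ :=
  Matrix.of fun r c => GEntry P lam j r c

/-- The multiset `[λ_{j,1},...,λ_{j,l_j}]` of stack `j`. -/
def stackMultiset {n : ℕ} (P : StackPartition n) (lam : Params P) (j : Fin P.t) :
    Multiset ℂ :=
  Multiset.map (lam j) Finset.univ.val

/-- `μ(z, j)`: multiplicity of `z` in the multiset `[λ_{j,1},...,λ_{j,l_j}]`. -/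
def mu {n : ℕ} (P : StackPartition n) (lam : Params P) (z : ℂ) (j : Fin P.t) : ℕ :=
  (stackMultiset P lam j).count z

/-- The multiset of all parameters of stacks `0,...,j` (`0`-indexed), so
`α(z, j) = (lamUpTo P lam j).count z`. -/
def lamUpTo {n : ℕ} (P : StackPartition n) (lam : Params P) (j : ℕ) : Multiset ℂ :=
  ∑ i : Fin P.t, if (i : ℕ) ≤ j then stackMultiset P lam i else 0

/-- Index type for the direct sum of one Jordan block per distinct element of a
multiset `s`, the block for `z` having size `s.count z`. -/
abbrev JordanIdx (s : Multiset ℂ) : Type := Σ z : s.toFinset, Fin (s.count z.val)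

/-- The direct sum `⊕_z J_{s.count z}(z)` over the distinct elements `z` of the
multiset `s` (lower Jordan blocks: eigenvalue on the diagonal, ones on the
subdiagonal). -/
def jordanOfMultiset (s : Multiset ℂ) : Matrix (JordanIdx s) (JordanIdx s) ℂ :=
  Matrix.of fun x y =>
    if x.1 = y.1 then
      (if (x.2 : ℕ) = (y.2 : ℕ) then x.1.val
       else if (x.2 : ℕ) = (y.2 : ℕ) + 1 then 1 else 0)
    else 0

/-- `0`-indexed Weyr characteristic: `weyr B z i = ω_{i+1}` where
`ω_k = dim ker (B - zI)^k − dim ker (B - zI)^{k-1}`. -/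
def weyr {n : ℕ} (B : Matrix (Fin n) (Fin n) ℂ) (z : ℂ) (i : ℕ) : ℕ :=
  Module.finrank ℂ (LinearMap.ker ((B - z • 1).mulVecLin ^ (i + 1)))
    - Module.finrank ℂ (LinearMap.ker ((B - z • 1).mulVecLin ^ i))

/-- `ℕ`-indexed entry of the block diagonal matrix `⊕_j (m_j - m_{j+1}) G_j`
(for each `j`, exactly `m j - m (j+1)` consecutive copies of `G_j`). -/
def dsEntry {n : ℕ} (P : StackPartition n) (lam : Params P) (r c : ℕ) : ℂ :=
  ∑ j : Fin P.t,
    if P.T j ≤ r ∧ r < P.T ((j : ℕ) + 1) ∧ P.T j ≤ c ∧ c < P.T ((j : ℕ) + 1)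
        ∧ (r - P.T j) / P.sE ((j : ℕ) + 1) = (c - P.T j) / P.sE ((j : ℕ) + 1) then
      GEntry P lam j ((r - P.T j) % P.sE ((j : ℕ) + 1)) ((c - P.T j) % P.sE ((j : ℕ) + 1))
    else 0

/-- Index type for `⊕_{j=1}^{t} (m_j - m_{j+1}) (⊕_z J_{α(z,j)}(z))`. -/
abbrev FullJordanIdx {n : ℕ} (P : StackPartition n) (lam : Params P) : Type :=
  Σ j : Fin P.t, Fin (P.m j - P.mE ((j : ℕ) + 1)) × JordanIdx (lamUpTo P lam (j : ℕ))

/-- The matrix `⊕_{j=1}^{t} (m_j - m_{j+1}) (⊕_z J_{α(z,j)}(z))`: for each `j`,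
`m j - m (j+1)` copies of the direct sum, over the distinct `z` with
`α(z,j) = μ(z,1) + ... + μ(z,j) > 0`, of the Jordan blocks `J_{α(z,j)}(z)`. -/
def fullJordan {n : ℕ} (P : StackPartition n) (lam : Params P) :
    Matrix (FullJordanIdx P lam) (FullJordanIdx P lam) ℂ :=
  Matrix.of fun x y =>
    if h : x.1 = y.1 then
      (fun y2 : Fin (P.m x.1 - P.mE ((x.1 : ℕ) + 1)) × JordanIdx (lamUpTo P lam (x.1 : ℕ)) =>
        if x.2.1 = y2.1 then jordanOfMultiset (lamUpTo P lam (x.1 : ℕ)) x.2.2 y2.2 else 0)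
      (cast (congrArg (fun j : Fin P.t =>
        Fin (P.m j - P.mE ((j : ℕ) + 1)) × JordanIdx (lamUpTo P lam (j : ℕ))) h.symm) y.2)
    else 0

end

/-! In `R_l(y) ⊗ E_m` only the last column of `R_l(y)` depends on `y`, and it is the vector of
negated lower coefficients of `∏ (X - yᵢ)`. Hence `cpm P λ = cpm P 0 + L (c λ)`, where `L` is linear
and injective on `∏_j ℂ^{l_j}` (each coordinate is read off at its own entry of the matrix), and the
coefficient map `c` is surjective because over `ℂ` every monic polynomial is a product of linear
factors. So `𝒫_π` is the translate of `range L`, of dimension `∑ l_j`. -/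

theorem Multiset.exists_fin_map_univ_eq {α : Type*} {s : Multiset α} {l : ℕ}
    (hs : Multiset.card s = l) : ∃ y : Fin l → α, Finset.univ.val.map y = s := by
  subst hs
  refine ⟨fun i => s.toList.get (i.cast (Multiset.length_toList s).symm), ?_⟩
  rw [Fin.univ_val_map, ← List.ofFn_congr, List.ofFn_get, Multiset.coe_toList]
  exact s.length_toList

theorem exists_coeff_prod_X_sub_C_eq {K : Type*} [Field K] [IsAlgClosed K] (l : ℕ)
    (w : Fin l → K) : ∃ y : Fin l → K, ∀ i : Fin l, (∏ k, (X - C (y k))).coeff i = w i := by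
  set p : K[X] := X ^ l + ∑ i : Fin l, C (w i) * X ^ (i : ℕ) with hp_def
  have hp : p.Monic := monic_X_pow_add (degree_sum_fin_lt w)
  have hdeg : p.natDegree = l := by
    rw [hp_def, natDegree_add_eq_left_of_degree_lt] <;> simp [degree_sum_fin_lt]
  obtain ⟨y, hy⟩ :=
    Multiset.exists_fin_map_univ_eq (IsAlgClosed.card_roots_eq_natDegree.trans hdeg)
  refine ⟨y, fun i => ?_⟩
  have hprod : ∏ k, (X - C (y k)) = p := by
    calc ∏ k, (X - C (y k)) = ((Finset.univ.val.map y).map fun a => X - C a).prod := by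
          rw [Multiset.map_map]; rfl
      _ = p := by
        rw [hy]
        exact prod_multiset_X_sub_C_of_monic_of_roots_card_eq hp
          IsAlgClosed.card_roots_eq_natDegree
  rw [hprod, hp_def, coeff_add, coeff_X_pow, finsetSum_coeff]
  simp [coeff_C_mul, coeff_X_pow, i.isLt.ne, Fin.val_inj]

lemma genCompE_eq_add {l : ℕ} (y : Fin l → ℂ) {a b : ℕ} (ha : a < l) (hb : b < l) :
    genCompE l y a b
      = genCompE l (fun _ => 0) a b + if b = l - 1 then -(∏ k, (X - C (y k))).coeff a else 0 := by
  -- at `y = 0` the product is `X ^ l`, whose coefficients below degree `l` vanish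
  have hX : (∏ k : Fin l, (X - C ((fun _ => 0 : Fin l → ℂ) k))).coeff a = 0 := by
    simp [coeff_X_pow, ha.ne]
  unfold genCompE
  split_ifs <;> simp_all; omega

namespace StackPartition

noncomputable section

variable {n : ℕ} (P : StackPartition n)

lemma S_mono : Monotone P.S := fun a b hab =>
  Finset.sum_le_sum fun i _ => by
    by_cases h : (i : ℕ) < a
    · simp [h, h.trans_le hab]
    · simp [h]

lemma S_succ (j : Fin P.t) : P.S (j + 1) = P.S j + P.l j * P.m j := by
  have split : ∀ i : Fin P.t, (if (i : ℕ) < j + 1 then P.l i * P.m i else 0)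
      = (if (i : ℕ) < j then P.l i * P.m i else 0) + if i = j then P.l i * P.m i else 0 := by
    intro i
    rcases lt_trichotomy i j with h | rfl | h
    · simp [h, h.ne, Nat.lt_succ_of_lt (Fin.lt_def.mp h)]
    · simp
    · simp [h.ne', (Fin.lt_def.mp h).not_gt, Nat.not_lt.mpr (Fin.lt_def.mp h)]
  simp only [S, split, Finset.sum_add_distrib, Finset.sum_ite_eq', Finset.mem_univ, if_true]

lemma S_succ_le (j : Fin P.t) : P.S (j + 1) ≤ n := by
  calc P.S (j + 1) ≤ P.S P.t := P.S_mono j.isLt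
    _ = n := by simp [S, P.sum_eq]

lemma eq_of_S_le_of_lt_S_succ {j j' : Fin P.t} {r : ℕ} (h : P.S j ≤ r ∧ r < P.S (j + 1))
    (h' : P.S j' ≤ r ∧ r < P.S (j' + 1)) : j = j' := by
  by_contra hne
  rcases Fin.lt_or_lt_of_ne hne with hlt | hlt
  · have := P.S_mono (show (j : ℕ) + 1 ≤ j' from hlt); omega
  · have := P.S_mono (show (j' : ℕ) + 1 ≤ j from hlt); omega

/-- The condition of the first sum in `cpmEntry`: the positions where the diagonal block
`R_{l j} ⊗ E_{m j}` may be nonzero. -/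
def InDiagBlock (j : Fin P.t) (r c : ℕ) : Prop :=
  P.S j ≤ r ∧ r < P.S (j + 1) ∧ P.S j ≤ c ∧ c < P.S (j + 1)
    ∧ (r - P.S j) % P.m j = (c - P.S j) % P.m j

lemma InDiagBlock.div_lt {j : Fin P.t} {r c : ℕ} (h : P.InDiagBlock j r c) :
    (r - P.S j) / P.m j < P.l j ∧ (c - P.S j) / P.m j < P.l j := by
  obtain ⟨hr₀, hr, hc₀, hc, -⟩ := h
  have := P.S_succ j
  constructor <;> exact (Nat.div_lt_iff_lt_mul (P.m_pos j)).mpr (by omega)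

instance (j : Fin P.t) (r c : ℕ) : Decidable (P.InDiagBlock j r c) := by
  unfold InDiagBlock; infer_instance

/-- `E_{i, l j - 1} ⊗ E_{m j}` placed as the `j`-th diagonal block: the coefficient pattern of the
entry `(i, l j - 1)` in the last column of `R_{l j}`. -/
def cornerMatrix (j : Fin P.t) (i : Fin (P.l j)) : Matrix (Fin n) (Fin n) ℂ :=
  of fun r c => if P.InDiagBlock j r c ∧ ((r : ℕ) - P.S j) / P.m j = i
      ∧ ((c : ℕ) - P.S j) / P.m j = P.l j - 1 then 1 else 0

def cornerMap : ((j : Fin P.t) → Fin (P.l j) → ℂ) →ₗ[ℂ] Matrix (Fin n) (Fin n) ℂ where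
  toFun w := ∑ j, ∑ i, w j i • P.cornerMatrix j i
  map_add' w w' := by simp only [Pi.add_apply, add_smul, Finset.sum_add_distrib]
  map_smul' a w := by
    simp only [Pi.smul_apply, smul_eq_mul, mul_smul, Finset.smul_sum, RingHom.id_apply]

lemma cornerMap_apply (w : (j : Fin P.t) → Fin (P.l j) → ℂ) (r c : Fin n) :
    P.cornerMap w r c = ∑ j, ∑ i, w j i * P.cornerMatrix j i r c := by
  simp [cornerMap, Matrix.sum_apply]

lemma inDiagBlock_pivot {j : Fin P.t} (i : Fin (P.l j)) :
    P.InDiagBlock j (P.S j + i * P.m j) (P.S j + (P.l j - 1) * P.m j) := by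
  have hsucc := P.S_succ j
  have hi : (i : ℕ) * P.m j < P.l j * P.m j := Nat.mul_lt_mul_of_pos_right i.isLt (P.m_pos j)
  have hl : (P.l j - 1) * P.m j < P.l j * P.m j :=
    Nat.mul_lt_mul_of_pos_right (Nat.sub_lt (P.l_pos j) one_pos) (P.m_pos j)
  refine ⟨by omega, by omega, by omega, by omega, ?_⟩
  simp

lemma cornerMap_apply_pivot (w : (j : Fin P.t) → Fin (P.l j) → ℂ) {j : Fin P.t}
    (i : Fin (P.l j)) (hr : P.S j + i * P.m j < n) (hc : P.S j + (P.l j - 1) * P.m j < n) :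
    P.cornerMap w ⟨_, hr⟩ ⟨_, hc⟩ = w j i := by
  rw [cornerMap_apply, Finset.sum_eq_single j, Finset.sum_eq_single i]
  · simp [cornerMatrix, P.inDiagBlock_pivot i, P.m_pos j]
  · intro i' _ hi'
    simp [cornerMatrix, P.m_pos j, Fin.val_ne_of_ne hi'.symm]
  · simp
  · intro j' _ hj'
    have hblock : ¬ P.InDiagBlock j' (P.S j + i * P.m j) (P.S j + (P.l j - 1) * P.m j) :=
      fun h => hj' (P.eq_of_S_le_of_lt_S_succ ⟨h.1, h.2.1⟩
        ⟨(P.inDiagBlock_pivot i).1, (P.inDiagBlock_pivot i).2.1⟩)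
    simp [cornerMatrix, hblock]
  · simp

lemma cornerMap_injective : Function.Injective P.cornerMap := by
  intro w w' h
  funext j i
  have hpiv := P.inDiagBlock_pivot i
  have hr := hpiv.2.1.trans_le (P.S_succ_le j)
  have hc := hpiv.2.2.2.1.trans_le (P.S_succ_le j)
  rw [← P.cornerMap_apply_pivot w i hr hc, ← P.cornerMap_apply_pivot w' i hr hc, h]

end

end StackPartition

open StackPartition

noncomputable def companionColumn {n : ℕ} (P : StackPartition n) (lam : Params P) :
    (j : Fin P.t) → Fin (P.l j) → ℂ :=
  fun j i => -(∏ k, (X - C (lam j k))).coeff i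

lemma companionColumn_surjective {n : ℕ} (P : StackPartition n) :
    Function.Surjective (companionColumn P) := by
  intro w
  choose y hy using fun j => exists_coeff_prod_X_sub_C_eq (P.l j) (-w j)
  exact ⟨y, funext₂ fun j i => by simp [companionColumn, hy]⟩

lemma cpm_eq_add_cornerMap {n : ℕ} (P : StackPartition n) (lam : Params P) :
    cpm P lam = cpm P (fun _ _ => 0) + P.cornerMap (companionColumn P lam) := by
  ext r c
  simp only [Matrix.add_apply, cpm, of_apply, cpmEntry, cornerMap_apply, ← InDiagBlock.eq_1]
  conv_rhs => rw [add_right_comm, ← Finset.sum_add_distrib]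
  congr 1
  refine Finset.sum_congr rfl fun j _ => ?_
  by_cases hb : P.InDiagBlock j r c
  · obtain ⟨ha, hb'⟩ := hb.div_lt
    rw [if_pos hb, if_pos hb, genCompE_eq_add (lam j) ha hb', Finset.sum_eq_single ⟨_, ha⟩]
    · simp [cornerMatrix, hb, companionColumn]
    · intro i _ hi
      simp [cornerMatrix, ne_comm.mp (Fin.val_ne_of_ne hi)]
    · simp
  · simp [hb, cornerMatrix]

theorem statement0_general (n : ℕ) (P : StackPartition n) :
    ∃ (S : Matrix (Fin n) (Fin n) ℂ) (V : Submodule ℂ (Matrix (Fin n) (Fin n) ℂ)),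
      Module.finrank ℂ V = (∑ j, P.l j) ∧
      planeSet P = (fun M => S + M) '' (V : Set (Matrix (Fin n) (Fin n) ℂ)) := by
  refine ⟨cpm P (fun _ _ => 0), LinearMap.range P.cornerMap, ?_, ?_⟩
  · rw [LinearMap.finrank_range_of_inj P.cornerMap_injective]
    simp [Module.finrank_pi_fintype]
  · have hrange : planeSet P = Set.range (cpm P) := by
      ext A
      simp [planeSet, eq_comm]
    rw [hrange, LinearMap.coe_range, ← Set.range_comp,
      ← (companionColumn_surjective P).range_comp]
    exact congrArg Set.range (funext (cpm_eq_add_cornerMap P))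

/-- For every partition `π = (n₁,...,n_d)` of `n` (with
`d = ∑ j, l j` addends), the set `𝒫_π` of canonical plane matrices of type `π`
is an affine plane in `Mat(n,n,ℂ)`: there are a fixed matrix `S` and a
`ℂ`-linear subspace `V` with `dim V = d` such that `𝒫_π = S + V`. -/
theorem statement0 (n : ℕ) (hn : 2 ≤ n) (P : StackPartition n) :
    ∃ (S : Matrix (Fin n) (Fin n) ℂ) (V : Submodule ℂ (Matrix (Fin n) (Fin n) ℂ)),
      Module.finrank ℂ V = (∑ j, P.l j) ∧
      planeSet P = (fun M => S + M) '' (V : Set (Matrix (Fin n) (Fin n) ℂ)) :=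
  statement0_general n P
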